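/- Let Γ be a Bieberbach-type subgroup of the affine group of ℝⁿ with parameters (n, q). Then there exists u₀ ∈ ℝⁿ such that, writing t for the translation t(x) = x + u₀, for every γ ∈ Γ the conjugate t ∘ γ ∘ t⁻¹ is the affine map x ↦ g_γ x + w_γ with w_γ ∈ (1/q)ℤⁿ; that is, t ∘ Γ ∘ t⁻¹ is contained in (1/q)ℤⁿ ⋊ GLₙ(ℤ). -/

import Mathlib

open Matrix

noncomputable section

abbrev Aff (n : ℕ) := (Fin n → ℝ) ≃ᵃ[ℝ] (Fin n → ℝ)

/-- `ℤⁿ` as a subset of `ℝⁿ`. -/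
def intVec (n : ℕ) : Set (Fin n → ℝ) := {v | ∀ i, ∃ m : ℤ, v i = m}

/-- `(1/q)ℤⁿ` as a subset of `ℝⁿ`. -/
def qIntVec (n q : ℕ) : Set (Fin n → ℝ) := {v | ∀ i, ∃ m : ℤ, (q : ℝ) * v i = m}

/-- The translation part `u_γ` of an affine bijection. -/
def uPart {n : ℕ} (γ : Aff n) : Fin n → ℝ := γ 0

/-- The linear part `g_γ` of an affine bijection. -/
def gPart {n : ℕ} (γ : Aff n) : (Fin n → ℝ) →ₗ[ℝ] (Fin n → ℝ) := γ.linear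

/-- A linear map lies in `GLₙ(ℤ)` if it is given by an integer matrix invertible over `ℤ`. -/
def IsIntegralGL {n : ℕ} (f : (Fin n → ℝ) →ₗ[ℝ] (Fin n → ℝ)) : Prop :=
  ∃ M : Matrix (Fin n) (Fin n) ℤ, IsUnit M ∧ ∀ x, f x = (M.map (Int.cast : ℤ → ℝ)) *ᵥ x

/-- The subgroup of translations by integer vectors. -/
def intTranslations (n : ℕ) : Subgroup (Aff n) where
  carrier := {γ | ∃ m ∈ intVec n, ∀ x, γ x = x + m}
  one_mem' := ⟨0, fun i => ⟨0, by simp⟩, fun x => by simp [AffineEquiv.one_def]⟩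
  mul_mem' := by
    rintro a b ⟨ma, hma, ha⟩ ⟨mb, hmb, hb⟩
    refine ⟨mb + ma, fun i => ?_, fun x => ?_⟩
    · obtain ⟨p, hp⟩ := hma i; obtain ⟨r, hr⟩ := hmb i
      exact ⟨r + p, by simp [Pi.add_apply, hp, hr]⟩
    · simp [AffineEquiv.coe_mul, Function.comp, hb, ha, add_assoc]
  inv_mem' := by
    rintro a ⟨m, hm, ha⟩
    refine ⟨-m, fun i => ?_, fun x => ?_⟩
    · obtain ⟨p, hp⟩ := hm i; exact ⟨-p, by simp [hp]⟩
    · have : a (x + -m) = x := by rw [ha]; abel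
      calc a⁻¹ x = a⁻¹ (a (x + -m)) := by rw [this]
      _ = x + -m := by rw [AffineEquiv.inv_def, AffineEquiv.symm_apply_apply]

/-- A Bieberbach-type subgroup of the affine group of `ℝⁿ` with parameters `(n, q)`. -/
structure IsBieberbach {n : ℕ} (Γ : Subgroup (Aff n)) (q : ℕ) : Prop where
  /-- every element has linear part in `GLₙ(ℤ)` -/
  integral : ∀ γ ∈ Γ, IsIntegralGL (gPart γ)
  /-- elements with identity linear part are integer translations -/
  trans_of_linear_id : ∀ γ ∈ Γ, γ.linear = LinearEquiv.refl ℝ (Fin n → ℝ) → γ ∈ intTranslations n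
  /-- all integer translations belong to `Γ` -/
  trans_le : intTranslations n ≤ Γ
  /-- the integer translations have index `q` in `Γ` -/
  index_eq : ((intTranslations n).subgroupOf Γ).index = q

/-!
The translation part `γ ↦ u_γ` is a 1-cocycle of `Γ` with values in `ℝⁿ`, twisted by the linear
part, and it is integral on the subgroup `T` of integer translations. Summing it over
representatives `γ_c` of the `q` cosets of `T` gives `S = ∑ u_{γ_c}`; since `γ` permutes the
cosets, `q • u_γ + g_γ S - S ∈ ℤⁿ`. So after conjugating by the translation by `-S/q` every
translation part lies in `(1/q)ℤⁿ`.
-/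

section Cocycle

variable {G M : Type*} [Group G] [AddCommGroup M]

theorem exists_index_nsmul_add_sub_mem (H : Subgroup G) [H.FiniteIndex] (N : AddSubgroup M)
    (ρ : G → M →+ M) (hρN : ∀ g, ∀ v ∈ N, ρ g v ∈ N) (c : G → M)
    (hc : ∀ g h, c (g * h) = c g + ρ g (c h)) (hcH : ∀ h ∈ H, c h ∈ N) :
    ∃ m, ∀ g, H.index • c g + ρ g m - m ∈ N := by
  have := H.fintypeQuotientOfFiniteIndex
  refine ⟨∑ x : G ⧸ H, c x.out, fun g => ?_⟩
  have hstep : ∀ x : G ⧸ H, c g + ρ g (c x.out) - c (g • x).out ∈ N := by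
    intro x
    have hcoset : (((g • x).out : G) : G ⧸ H) = ((g * x.out : G) : G ⧸ H) := by
      rw [QuotientGroup.out_eq', ← MulAction.Quotient.coe_smul_out, smul_eq_mul]
    obtain ⟨h, hh, hgx⟩ : ∃ h ∈ H, g * x.out = (g • x).out * h :=
      ⟨_, QuotientGroup.eq.mp hcoset, by group⟩
    rw [← hc, hgx, hc, add_sub_cancel_left]
    exact hρN _ _ (hcH h hh)
  have hreindex : ∑ x : G ⧸ H, c (g • x).out = ∑ x : G ⧸ H, c x.out :=
    Fintype.sum_bijective _ (MulAction.bijective g) _ _ fun _ => rfl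
  have hsum := N.sum_mem fun x (_ : x ∈ Finset.univ) => hstep x
  rwa [Finset.sum_sub_distrib, Finset.sum_add_distrib, hreindex, ← map_sum, Finset.sum_const,
    Finset.card_univ, ← Nat.card_eq_fintype_card, ← Subgroup.index] at hsum

end Cocycle

section

variable {n : ℕ}

def intLattice (n : ℕ) : AddSubgroup (Fin n → ℝ) :=
  AddSubgroup.pi Set.univ fun _ => (Int.castAddHom ℝ).range

theorem mem_intLattice_iff {v : Fin n → ℝ} : v ∈ intLattice n ↔ v ∈ intVec n := by
  simp only [intLattice, AddSubgroup.mem_pi, Set.mem_univ, true_implies, AddMonoidHom.mem_range,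
    Int.coe_castAddHom, intVec, Set.mem_ofPred_eq, eq_comm]

theorem IsIntegralGL.map_mem_intLattice {f : (Fin n → ℝ) →ₗ[ℝ] (Fin n → ℝ)} (hf : IsIntegralGL f)
    {v : Fin n → ℝ} (hv : v ∈ intLattice n) : f v ∈ intLattice n := by
  obtain ⟨M, -, hM⟩ := hf
  choose z hz using mem_intLattice_iff.mp hv
  obtain rfl : v = Int.cast ∘ z := funext hz
  rw [mem_intLattice_iff, hM]
  exact fun i => ⟨(M *ᵥ z) i, (RingHom.map_mulVec (Int.castRingHom ℝ) M z i).symm⟩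

theorem apply_eq_gPart_add_uPart (γ : Aff n) (x : Fin n → ℝ) : γ x = gPart γ x + uPart γ := by
  simpa [gPart, uPart] using γ.map_vadd 0 x

theorem uPart_mul (γ δ : Aff n) : uPart (γ * δ) = uPart γ + gPart γ (uPart δ) := by
  rw [uPart, AffineEquiv.coe_mul, Function.comp_apply, apply_eq_gPart_add_uPart, add_comm]
  rfl

theorem apply_sub_add_eq (γ : Aff n) (u x : Fin n → ℝ) :
    γ (x - u) + u = gPart γ x + (uPart γ - gPart γ u + u) := by
  rw [apply_eq_gPart_add_uPart, map_sub]
  abel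

theorem uPart_mem_intLattice {τ : Aff n} (hτ : τ ∈ intTranslations n) :
    uPart τ ∈ intLattice n := by
  obtain ⟨m, hm, hτ⟩ := hτ
  simpa [uPart, hτ 0, mem_intLattice_iff] using hm

theorem mem_qIntVec_of_nsmul_mem {q : ℕ} {w : Fin n → ℝ} (hw : q • w ∈ intLattice n) :
    w ∈ qIntVec n q := by
  intro i
  obtain ⟨m, hm⟩ := mem_intLattice_iff.mp hw i
  exact ⟨m, by simpa [nsmul_eq_mul] using hm⟩

end

/-- **Claim 1** (Farrell–Gogolev, proof of Proposition 3): for a Bieberbach-type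
subgroup `Γ` of the affine group of `ℝⁿ` with parameters `(n, q)`, there is a vector
`u₀` such that conjugating `Γ` by the translation `t : x ↦ x + u₀` lands in
`(1/q)ℤⁿ ⋊ GLₙ(ℤ)`; i.e. for each `γ ∈ Γ` the map `t ∘ γ ∘ t⁻¹` is
`x ↦ g_γ x + w_γ` with `w_γ ∈ (1/q)ℤⁿ`. -/
theorem claim1 {n q : ℕ} (hq : 0 < q) (Γ : Subgroup (Aff n)) (hΓ : IsBieberbach Γ q) :
    ∃ u₀ : Fin n → ℝ, ∀ γ ∈ Γ, ∃ w ∈ qIntVec n q,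
      ∀ x, γ (x - u₀) + u₀ = γ.linear x + w := by
  have : ((intTranslations n).subgroupOf Γ).FiniteIndex := ⟨by rw [hΓ.index_eq]; omega⟩
  obtain ⟨m, hm⟩ := exists_index_nsmul_add_sub_mem ((intTranslations n).subgroupOf Γ)
    (intLattice n) (fun γ => (gPart (γ : Aff n)).toAddMonoidHom)
    (fun γ _ hv => (hΓ.integral γ γ.2).map_mem_intLattice hv) (fun γ => uPart (γ : Aff n))
    (fun γ δ => uPart_mul (γ : Aff n) δ)
    (fun τ hτ => uPart_mem_intLattice (Subgroup.mem_subgroupOf.mp hτ))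
  refine ⟨-((q : ℝ)⁻¹ • m), fun γ hγ => ⟨_, mem_qIntVec_of_nsmul_mem ?_, apply_sub_add_eq γ _⟩⟩
  convert hm ⟨γ, hγ⟩ using 1
  have hq' : (q : ℝ) ≠ 0 := by positivity
  simp only [hΓ.index_eq, ← Nat.cast_smul_eq_nsmul ℝ, smul_add, smul_sub, map_neg, map_smul,
    smul_neg, smul_smul, mul_inv_cancel₀ hq', one_smul, LinearMap.toAddMonoidHom_coe]
  abel
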